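/- arXiv:2001.09361 — 4 statements merged into one kernel-verified Lean document; each statement's English description precedes it below -/
import Mathlib

section
/- Let F : A × A → M be an f-biderivation. If α ≠ 0, M is (n-1)-torsion free, and α is M-regular, then F(1, y) = 0 and F(y, 1) = 0 for all y ∈ A. -/
open Equiv

lemma nsmul_pred_eq_zero_of_nsmul_eq {M : Type*} [AddCommGroup M] {n : ℕ} {m : M}
    (h : n • m = m) : (n - 1) • m = 0 := by
  cases n with
  | zero => simp
  | succ k => simpa [succ_nsmul] using h

section PermPoly

variable {R A M : Type*} [CommRing R] [Ring A] [AddCommGroup M] [Module R M] [Module A M]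
  [Module Aᵐᵒᵖ M] {n : ℕ}

/-- The multilinear polynomial `f(x₁, …, xₙ) = ∑_π α_π x_{π(1)} ⋯ x_{π(n)}`. -/
def permPoly [Algebra R A] (α : Perm (Fin n) → R) (x : Fin n → A) : A :=
  ∑ π : Perm (Fin n), α π • (List.ofFn fun j => x (π j)).prod

/-- `∑ᵢ f(x₁, …, xᵢ₋₁, mᵢ, xᵢ₊₁, …, xₙ)`, the right-hand side of the `f`-derivation rule;
`mᵢ` sits at position `π⁻¹ i` of the monomial indexed by `π`. -/
def permPolyExpansion (α : Perm (Fin n) → R) (x : Fin n → A) (m : Fin n → M) : M :=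
  ∑ i : Fin n, ∑ π : Perm (Fin n),
    α π • (((List.ofFn fun j => x (π j)).take (π.symm i).val).prod •
      (MulOpposite.op ((List.ofFn fun j => x (π j)).drop ((π.symm i).val + 1)).prod • m i))

lemma permPoly_one [Algebra R A] (α : Perm (Fin n) → R) :
    permPoly α (fun _ => (1 : A)) = (∑ π, α π) • (1 : A) := by
  simp [permPoly, Finset.sum_smul]

lemma permPolyExpansion_one (α : Perm (Fin n) → R) (m : M) :
    permPolyExpansion α (fun _ => (1 : A)) (fun _ => m) = n • (∑ π, α π) • m := by
  simp [permPolyExpansion, Finset.sum_smul]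

/-- At `x = (1, …, 1)` the rule reads `α • G 1 = n • α • G 1`. -/
lemma map_one_eq_zero_of_permPoly_rule [Algebra R A] (α : Perm (Fin n) → R) (G : A →ₗ[R] M)
    (hG : G (permPoly α fun _ => 1) = permPolyExpansion α (fun _ => (1 : A)) (fun _ => G 1))
    (htf : ∀ m : M, (n - 1) • m = 0 → m = 0)
    (hreg : ∀ m : M, (∑ π, α π) • m = 0 → m = 0) :
    G 1 = 0 := by
  rw [permPoly_one, map_smul, permPolyExpansion_one] at hG
  exact hreg _ (htf _ (nsmul_pred_eq_zero_of_nsmul_eq hG.symm))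

end PermPoly

theorem f_biderivation_vanishes_at_one_general
    (R A M : Type*) [CommRing R] [Ring A] [Algebra R A]
    [AddCommGroup M] [Module R M]
    [Module A M] [Module Aᵐᵒᵖ M]
    (n : ℕ)
    (α : Equiv.Perm (Fin n) → R)
    (F : A →ₗ[R] A →ₗ[R] M)
    -- `F` is an `f`-biderivation:
    (hF1 : ∀ (x : Fin n → A) (z : A),
      F (∑ π : Equiv.Perm (Fin n), α π • (List.ofFn fun j => x (π j)).prod) z
        = ∑ i : Fin n, ∑ π : Equiv.Perm (Fin n),
            α π • (((List.ofFn fun j => x (π j)).take (π.symm i).val).prod •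
              (MulOpposite.op ((List.ofFn fun j => x (π j)).drop ((π.symm i).val + 1)).prod •
                F (x i) z)))
    (hF2 : ∀ (x : Fin n → A) (z : A),
      F z (∑ π : Equiv.Perm (Fin n), α π • (List.ofFn fun j => x (π j)).prod)
        = ∑ i : Fin n, ∑ π : Equiv.Perm (Fin n),
            α π • (((List.ofFn fun j => x (π j)).take (π.symm i).val).prod •
              (MulOpposite.op ((List.ofFn fun j => x (π j)).drop ((π.symm i).val + 1)).prod •
                F z (x i))))
    -- `M` is `(n-1)`-torsion free:
    (htf : ∀ m : M, (n - 1) • m = 0 → m = 0)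
    -- `α` is `M`-regular:
    (hreg : ∀ m : M, (∑ π : Equiv.Perm (Fin n), α π) • m = 0 → m = 0) :
    ∀ y : A, F 1 y = 0 ∧ F y 1 = 0 := fun y =>
  ⟨map_one_eq_zero_of_permPoly_rule α (F.flip y) (hF1 (fun _ => 1) y) htf hreg,
    map_one_eq_zero_of_permPoly_rule α (F y) (hF2 (fun _ => 1) y) htf hreg⟩

/-- Let `F : A × A → M` be an `f`-biderivation, where
`f(x₁,...,xₙ) = ∑_{π ∈ Sₙ} α_π x_{π(1)} ⋯ x_{π(n)}` is a fixed multilinear polynomial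
and `α = ∑_π α_π`.  If `α ≠ 0`, `M` is `(n-1)`-torsion free and `α` is `M`-regular,
then `F(1,y) = 0` and `F(y,1) = 0` for all `y ∈ A`. -/
theorem f_biderivation_vanishes_at_one
    (R A M : Type*) [CommRing R] [Ring A] [Algebra R A]
    [AddCommGroup M] [Module R M]
    [Module A M] [Module Aᵐᵒᵖ M] [SMulCommClass A Aᵐᵒᵖ M]
    [IsScalarTower R A M] [IsScalarTower R Aᵐᵒᵖ M]
    (n : ℕ) (hn : 2 ≤ n)
    (α : Equiv.Perm (Fin n) → R)
    (hα₀ : ∃ π : Equiv.Perm (Fin n), α π ≠ 0)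
    (F : A →ₗ[R] A →ₗ[R] M)
    -- `F` is an `f`-biderivation:
    (hF1 : ∀ (x : Fin n → A) (z : A),
      F (∑ π : Equiv.Perm (Fin n), α π • (List.ofFn fun j => x (π j)).prod) z
        = ∑ i : Fin n, ∑ π : Equiv.Perm (Fin n),
            α π • (((List.ofFn fun j => x (π j)).take (π.symm i).val).prod •
              (MulOpposite.op ((List.ofFn fun j => x (π j)).drop ((π.symm i).val + 1)).prod •
                F (x i) z)))
    (hF2 : ∀ (x : Fin n → A) (z : A),
      F z (∑ π : Equiv.Perm (Fin n), α π • (List.ofFn fun j => x (π j)).prod)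
        = ∑ i : Fin n, ∑ π : Equiv.Perm (Fin n),
            α π • (((List.ofFn fun j => x (π j)).take (π.symm i).val).prod •
              (MulOpposite.op ((List.ofFn fun j => x (π j)).drop ((π.symm i).val + 1)).prod •
                F z (x i))))
    -- `α ≠ 0`:
    (hα : (∑ π : Equiv.Perm (Fin n), α π) ≠ 0)
    -- `M` is `(n-1)`-torsion free:
    (htf : ∀ m : M, (n - 1) • m = 0 → m = 0)
    -- `α` is `M`-regular:
    (hreg : ∀ m : M, (∑ π : Equiv.Perm (Fin n), α π) • m = 0 → m = 0) :
    ∀ y : A, F 1 y = 0 ∧ F y 1 = 0 :=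
  f_biderivation_vanishes_at_one_general R A M n α F hF1 hF2 htf hreg
end

section
/- Let J : A × A → A be a Jordan biderivation. Then J = J₁ + J₂, where J₁(x, y) = [x, [y, J(e, e)]] for all x, y ∈ A, the element J(e,e) satisfies [[x, y], J(e,e)] = 0 for all x, y ∈ A (so that J₁ is an extremal biderivation whenever J(e,e) ∉ Z(A)), and J₂ = J - J₁ is a Jordan biderivation satisfying J₂(e, e) = 0. -/
/-!
Computing `J (x * x) (y * y)` in two ways and polarizing gives
`[[x, y], J z w] + [[z, y], J x w] + [[x, w], J z y] + [[z, w], J x y] = 0`; with `z = w = e`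
it controls `[[x, y], a]` for `a = J e e`. Split `x` and `y` into a part commuting with `e` and
a Peirce off-diagonal part `w = [e, [e, w]]`. Every pairing except `eA(1 - e)` against
`(1 - e)Ae` follows from the identity at once; that one follows by comparing the two
linearized Jordan identities for `J u v`. Once `[[A, A], a] = 0`, the map `(x, y) ↦ [x, [y, a]]`
is a Jordan biderivation, and it agrees with `J` at `(e, e)` because `a` is off-diagonal.
-/

section Peirce

variable {A : Type*} [Ring A] {e w : A}

/-- For an idempotent `e` this says `w ∈ eA(1 - e) + (1 - e)Ae`, the Peirce `½`-space of `e`. -/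
def IsOffDiagonal (e w : A) : Prop := e * w + w * e = w

theorem isOffDiagonal_lie (he : IsIdempotentElem e) (z : A) : IsOffDiagonal e ⁅e, z⁆ := by
  rw [IsOffDiagonal, Ring.lie_def]
  linear_combination (norm := noncomm_ring) he.eq * z - z * he.eq

namespace IsOffDiagonal

theorem mul_mul_eq_zero (he : IsIdempotentElem e) (hw : IsOffDiagonal e w) : e * w * e = 0 := by
  have hw' : e * w + w * e = w := hw
  linear_combination (norm := noncomm_ring) e * hw' * e - he.eq * w * e - e * w * he.eq

theorem lie_lie (he : IsIdempotentElem e) (hw : IsOffDiagonal e w) : ⁅e, ⁅e, w⁆⁆ = w := by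
  have hw' : e * w + w * e = w := hw
  rw [Ring.lie_def, Ring.lie_def]
  linear_combination (norm := noncomm_ring)
    he.eq * w + w * he.eq + hw' - 2 * hw.mul_mul_eq_zero he

theorem lie_of_commute {d : A} (hd : Commute e d) (hw : IsOffDiagonal e w) :
    IsOffDiagonal e ⁅d, w⁆ := by
  have hw' : e * w + w * e = w := hw
  rw [IsOffDiagonal, Ring.lie_def]
  linear_combination (norm := noncomm_ring) hd.eq * w + w * hd.eq + d * hw' - hw' * d

theorem lie_idem_mul_eq_zero (he : IsIdempotentElem e) {w' : A} (hw : IsOffDiagonal e w)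
    (hw' : IsOffDiagonal e w') : ⁅e * w, e * w'⁆ = 0 := by
  rw [Ring.lie_def, ← mul_assoc, ← mul_assoc, hw.mul_mul_eq_zero he, hw'.mul_mul_eq_zero he,
    zero_mul, zero_mul, sub_self]

theorem lie_mul_idem_eq_zero (he : IsIdempotentElem e) {w' : A} (hw : IsOffDiagonal e w)
    (hw' : IsOffDiagonal e w') : ⁅w * e, w' * e⁆ = 0 := by
  rw [Ring.lie_def, mul_assoc, mul_assoc w', ← mul_assoc e, ← mul_assoc e,
    hw.mul_mul_eq_zero he, hw'.mul_mul_eq_zero he, mul_zero, mul_zero, sub_self]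

end IsOffDiagonal

theorem commute_sub_lie_lie (he : IsIdempotentElem e) (x : A) :
    Commute e (x - ⁅e, ⁅e, x⁆⁆) := by
  have h := (isOffDiagonal_lie he x).lie_lie he
  rw [commute_iff_lie_eq]
  simp only [Ring.lie_def] at h ⊢
  linear_combination (norm := noncomm_ring) -h

end Peirce

section JordanBiderivation

variable {R A : Type*} [CommRing R] [Ring A] [Algebra R A]

structure IsJordanBiderivation (J : A →ₗ[R] A →ₗ[R] A) : Prop where
  apply_mul_self_left (x y : A) : J (x * x) y = x * J x y + J x y * x
  apply_mul_self_right (x y : A) : J x (y * y) = y * J x y + J x y * y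

namespace IsJordanBiderivation

variable {J : A →ₗ[R] A →ₗ[R] A} (hJ : IsJordanBiderivation J)
include hJ

theorem sub {J' : A →ₗ[R] A →ₗ[R] A} (hJ' : IsJordanBiderivation J') :
    IsJordanBiderivation (J - J') where
  apply_mul_self_left x y := by
    simp only [LinearMap.sub_apply, hJ.apply_mul_self_left, hJ'.apply_mul_self_left]
    noncomm_ring
  apply_mul_self_right x y := by
    simp only [LinearMap.sub_apply, hJ.apply_mul_self_right, hJ'.apply_mul_self_right]
    noncomm_ring

theorem apply_mul_add_mul_left (x z y : A) :
    J (x * z + z * x) y = x * J z y + J z y * x + z * J x y + J x y * z := by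
  have h := hJ.apply_mul_self_left (x + z) y
  simp only [add_mul, mul_add, map_add, LinearMap.add_apply, hJ.apply_mul_self_left] at h ⊢
  linear_combination (norm := noncomm_ring) h

theorem apply_mul_add_mul_right (x y w : A) :
    J x (y * w + w * y) = y * J x w + J x w * y + w * J x y + J x y * w := by
  have h := hJ.apply_mul_self_right x (y + w)
  simp only [add_mul, mul_add, map_add, hJ.apply_mul_self_right] at h ⊢
  linear_combination (norm := noncomm_ring) h

theorem lie_lie_apply_self (x y : A) : ⁅⁅x, y⁆, J x y⁆ = 0 := by
  -- both sides expand `J (x * x) (y * y)`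
  have h : J (x * x) (y * y) = J (x * x) (y * y) := rfl
  nth_rw 1 [hJ.apply_mul_self_left] at h
  rw [hJ.apply_mul_self_right, hJ.apply_mul_self_right, hJ.apply_mul_self_left] at h
  simp only [Ring.lie_def]
  linear_combination (norm := noncomm_ring) h

theorem lie_lie_apply_polar_right (x y w : A) : ⁅⁅x, y⁆, J x w⁆ + ⁅⁅x, w⁆, J x y⁆ = 0 := by
  have h := hJ.lie_lie_apply_self x (y + w)
  have hy := hJ.lie_lie_apply_self x y
  have hw := hJ.lie_lie_apply_self x w
  simp only [map_add, Ring.lie_def] at h hy hw ⊢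
  linear_combination (norm := noncomm_ring) h - hy - hw

theorem lie_lie_apply_polar (x z y w : A) :
    ⁅⁅x, y⁆, J z w⁆ + ⁅⁅z, y⁆, J x w⁆ + ⁅⁅x, w⁆, J z y⁆ + ⁅⁅z, w⁆, J x y⁆ = 0 := by
  have h := hJ.lie_lie_apply_polar_right (x + z) y w
  have hx := hJ.lie_lie_apply_polar_right x y w
  have hz := hJ.lie_lie_apply_polar_right z y w
  simp only [map_add, LinearMap.add_apply, Ring.lie_def] at h hx hz ⊢
  linear_combination (norm := noncomm_ring) h - hx - hz

theorem lie_lie_apply_diag (x y : A) : ⁅⁅x, y⁆, J x x⁆ = 0 := by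
  simpa only [Ring.lie_def, sub_self, zero_mul, mul_zero, add_zero]
    using hJ.lie_lie_apply_polar_right x y x

theorem lie_lie_apply_diag_of_commute {e u v : A} (hu : Commute e u) (hv : Commute e v) :
    ⁅⁅u, v⁆, J e e⁆ = 0 := by
  have h := hJ.lie_lie_apply_polar u e v e
  rw [commute_iff_lie_eq.mp hv, commute_iff_lie_eq.mp hu.symm] at h
  simpa only [Ring.lie_def, sub_self, zero_mul, mul_zero, add_zero] using h

variable {e : A} (he : IsIdempotentElem e)
include he

theorem isOffDiagonal_apply_left (y : A) : IsOffDiagonal e (J e y) := by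
  have h := hJ.apply_mul_self_left e y
  rw [he.eq] at h
  exact h.symm

theorem isOffDiagonal_apply_right (x : A) : IsOffDiagonal e (J x e) := by
  have h := hJ.apply_mul_self_right x e
  rw [he.eq] at h
  exact h.symm

theorem lie_apply_idem_of_isOffDiagonal {w : A} (hw : IsOffDiagonal e w) : ⁅w, J e e⁆ = 0 := by
  simpa only [hw.lie_lie he] using hJ.lie_lie_apply_diag e ⁅e, w⁆

theorem lie_lie_apply_idem_of_corner {u v : A} (hu : e * u = u) (hu' : u * e = 0)
    (hv : e * v = 0) (hv' : v * e = v) : ⁅⁅u, v⁆, J e e⁆ = 0 := by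
  have hf : e * J e v + J e v * e = J e v := hJ.isOffDiagonal_apply_left he v
  have hg : e * J u e + J u e * e = J u e := hJ.isOffDiagonal_apply_right he u
  have h₁ : u * J e v + J e v * u = v * J u e + J u e * v := by
    have h := hJ.apply_mul_add_mul_left u e v
    have h' := hJ.apply_mul_add_mul_right u v e
    rw [hu', hu, zero_add] at h
    rw [hv', hv, add_zero] at h'
    linear_combination (norm := abel) h' - h
  -- `h₁` multiplied by `e` on both sides, where only `u * J e v` and `J u e * v` survive
  have h₂ : u * J e v = J u e * v := by
    linear_combination (norm := noncomm_ring) e * h₁ * e - hu * J e v * e - u * hf + hu' * J e v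
      - e * J e v * hu' + hv * J u e * e + e * J u e * hv' + hg * v - J u e * hv
  have h₃ : J e v * u = v * J u e := by
    linear_combination (norm := abel) h₁ - h₂
  have hev : ⁅e, v⁆ = -v := by rw [Ring.lie_def, hv, hv', zero_sub]
  have hue : ⁅u, e⁆ = -u := by rw [Ring.lie_def, hu, hu', zero_sub]
  have h := hJ.lie_lie_apply_polar u e v e
  rw [hev, hue] at h
  simp only [Ring.lie_def, sub_self, zero_mul, mul_zero, add_zero] at h ⊢
  linear_combination (norm := noncomm_ring) h + h₂ - h₃

theorem lie_lie_apply_idem_of_isOffDiagonal {o o' : A} (ho : IsOffDiagonal e o)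
    (ho' : IsOffDiagonal e o') : ⁅⁅o, o'⁆, J e e⁆ = 0 := by
  have h : ⁅⁅o, o'⁆, J e e⁆ = ⁅⁅e * o, e * o'⁆, J e e⁆ + ⁅⁅o * e, o' * e⁆, J e e⁆
      + ⁅⁅e * o, o' * e⁆, J e e⁆ - ⁅⁅e * o', o * e⁆, J e e⁆ := by
    conv_lhs => rw [← ho, ← ho']
    simp only [Ring.lie_def]
    noncomm_ring
  have corner {w w' : A} (hw : IsOffDiagonal e w) (hw' : IsOffDiagonal e w') :
      ⁅⁅e * w, w' * e⁆, J e e⁆ = 0 :=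
    hJ.lie_lie_apply_idem_of_corner he (by rw [← mul_assoc, he.eq]) (hw.mul_mul_eq_zero he)
      (by rw [← mul_assoc, hw'.mul_mul_eq_zero he]) (by rw [mul_assoc, he.eq])
  rw [h, ho.lie_idem_mul_eq_zero he ho', ho.lie_mul_idem_eq_zero he ho', corner ho ho',
    corner ho' ho]
  simp only [Ring.lie_def, zero_mul, mul_zero, sub_self, add_zero]

theorem lie_lie_apply_idem (x y : A) : ⁅⁅x, y⁆, J e e⁆ = 0 := by
  have key {d o d' o' : A} (hd : Commute e d) (ho : IsOffDiagonal e o) (hd' : Commute e d')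
      (ho' : IsOffDiagonal e o') : ⁅⁅d + o, d' + o'⁆, J e e⁆ = 0 := by
    have h : ⁅⁅d + o, d' + o'⁆, J e e⁆ = ⁅⁅d, d'⁆, J e e⁆ + ⁅⁅d, o'⁆, J e e⁆
        - ⁅⁅d', o⁆, J e e⁆ + ⁅⁅o, o'⁆, J e e⁆ := by
      simp only [Ring.lie_def]
      noncomm_ring
    rw [h, hJ.lie_lie_apply_diag_of_commute hd hd',
      hJ.lie_apply_idem_of_isOffDiagonal he (ho'.lie_of_commute hd),
      hJ.lie_apply_idem_of_isOffDiagonal he (ho.lie_of_commute hd'),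
      hJ.lie_lie_apply_idem_of_isOffDiagonal he ho ho']
    simp only [add_zero, sub_zero]
  simpa only [sub_add_cancel] using key (commute_sub_lie_lie he x) (isOffDiagonal_lie he ⁅e, x⁆)
    (commute_sub_lie_lie he y) (isOffDiagonal_lie he ⁅e, y⁆)

end IsJordanBiderivation

variable (R) in
def doubleCommutator (a : A) : A →ₗ[R] A →ₗ[R] A :=
  LinearMap.mk₂ R (fun x y => ⁅x, ⁅y, a⁆⁆)
    (fun x x' y => by simp only [Ring.lie_def]; noncomm_ring)
    (fun c x y => by simp only [Ring.lie_def, smul_mul_assoc, mul_smul_comm, smul_sub])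
    (fun x y y' => by simp only [Ring.lie_def]; noncomm_ring)
    (fun c x y => by
      simp only [Ring.lie_def, smul_mul_assoc, mul_smul_comm, smul_sub, mul_sub, sub_mul])

theorem doubleCommutator_apply (a x y : A) : doubleCommutator R a x y = ⁅x, ⁅y, a⁆⁆ := rfl

theorem isJordanBiderivation_doubleCommutator {a : A} (ha : ∀ x y : A, ⁅⁅x, y⁆, a⁆ = 0) :
    IsJordanBiderivation (doubleCommutator R a) where
  apply_mul_self_left x y := by
    simp only [doubleCommutator_apply, Ring.lie_def]
    noncomm_ring
  apply_mul_self_right x y := by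
    have h := ha x y
    have h' := ha x (y * y)
    simp only [doubleCommutator_apply, Ring.lie_def] at h h' ⊢
    linear_combination (norm := noncomm_ring) h' - h * y - y * h

end JordanBiderivation

theorem jordan_biderivation_extremal_decomposition_general
    (R A : Type*) [CommRing R] [Ring A] [Algebra R A]
    -- `e` is a nontrivial idempotent:
    (e : A) (he : e * e = e)
    (J : A →ₗ[R] A →ₗ[R] A)
    -- `J` is a Jordan biderivation:
    (hJ1 : ∀ x y : A, J (x * x) y = x * J x y + J x y * x)
    (hJ2 : ∀ x y : A, J x (y * y) = y * J x y + J x y * y) :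
    ∃ J₂ : A →ₗ[R] A →ₗ[R] A,
      -- `J = J₁ + J₂`, with `J₁(x, y) = [x, [y, J(e, e)]]`:
      (∀ x y : A, J x y
          = (x * (y * J e e - J e e * y) - (y * J e e - J e e * y) * x) + J₂ x y) ∧
      -- `[[x, y], J(e, e)] = 0` for all `x, y ∈ A`:
      (∀ x y : A, (x * y - y * x) * J e e - J e e * (x * y - y * x) = 0) ∧
      -- `J₂` is a Jordan biderivation:
      (∀ x y : A, J₂ (x * x) y = x * J₂ x y + J₂ x y * x) ∧
      (∀ x y : A, J₂ x (y * y) = y * J₂ x y + J₂ x y * y) ∧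
      -- `J₂(e, e) = 0`:
      J₂ e e = 0 := by
  have hJ : IsJordanBiderivation J := ⟨hJ1, hJ2⟩
  have central := hJ.lie_lie_apply_idem he
  have hJ₂ := hJ.sub (isJordanBiderivation_doubleCommutator central)
  refine ⟨J - doubleCommutator R (J e e), fun x y => ?_, fun x y => ?_,
    hJ₂.apply_mul_self_left, hJ₂.apply_mul_self_right, ?_⟩
  · rw [LinearMap.sub_apply, LinearMap.sub_apply, doubleCommutator_apply, Ring.lie_def,
      Ring.lie_def, add_sub_cancel]
  · simpa only [Ring.lie_def] using central x y
  · rw [LinearMap.sub_apply, LinearMap.sub_apply, doubleCommutator_apply,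
      (hJ.isOffDiagonal_apply_left he e).lie_lie he, sub_self]

/-- Let `J : A × A → A` be a Jordan biderivation and `e` a nontrivial
idempotent.  Then `J = J₁ + J₂` where `J₁(x,y) = [x,[y,J(e,e)]]`, the element `J(e,e)`
satisfies `[[x,y],J(e,e)] = 0` for all `x, y` (so `J₁` is an extremal biderivation
whenever `J(e,e) ∉ Z(A)`), and `J₂ = J - J₁` is a Jordan biderivation with
`J₂(e,e) = 0`. -/
theorem jordan_biderivation_extremal_decomposition
    (R A : Type*) [CommRing R] [Ring A] [Algebra R A]
    -- `A` is 2-torsion free: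
    (htf : ∀ x : A, x + x = 0 → x = 0)
    -- `e` is a nontrivial idempotent:
    (e : A) (he : e * e = e) (he0 : e ≠ 0) (he1 : e ≠ 1)
    (J : A →ₗ[R] A →ₗ[R] A)
    -- `J` is a Jordan biderivation:
    (hJ1 : ∀ x y : A, J (x * x) y = x * J x y + J x y * x)
    (hJ2 : ∀ x y : A, J x (y * y) = y * J x y + J x y * y) :
    ∃ J₂ : A →ₗ[R] A →ₗ[R] A,
      -- `J = J₁ + J₂`, with `J₁(x, y) = [x, [y, J(e, e)]]`:
      (∀ x y : A, J x y
          = (x * (y * J e e - J e e * y) - (y * J e e - J e e * y) * x) + J₂ x y) ∧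
      -- `[[x, y], J(e, e)] = 0` for all `x, y ∈ A`:
      (∀ x y : A, (x * y - y * x) * J e e - J e e * (x * y - y * x) = 0) ∧
      -- `J₂` is a Jordan biderivation:
      (∀ x y : A, J₂ (x * x) y = x * J₂ x y + J₂ x y * x) ∧
      (∀ x y : A, J₂ x (y * y) = y * J₂ x y + J₂ x y * y) ∧
      -- `J₂(e, e) = 0`:
      J₂ e e = 0 :=
  jordan_biderivation_extremal_decomposition_general R A e he J hJ1 hJ2
end

section
/- Let J : A × A → A be a Jordan biderivation with J(e, e) = 0. Then for all a, a' ∈ A₁₁ and b, b' ∈ A₂₂: J(a, a') = eJ(a, a')e, J(b, b') = e'J(b, b')e', and J(a, b) = 0 = J(b, a). -/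
/-!
Polarizing the two Jordan identities turns `J (f * z + z * f) y` and `J x (f * w + w * f)` into
sums of four terms. For an idempotent `f` with `J f f = 0`, this forces `J f w = 0` on the corner
`f A f`, and then `J z y` to be an eigenvector of `X ↦ f * X + X * f` with eigenvalue `2` whenever
`z ∈ f A f` and `J f y = 0`; without `2`-torsion such an `X` lies in `f A f`. Since
`J (1 - f) = - J f` in either argument, the same holds for `1 - f`, and since `J.flip` is again a
Jordan biderivation, it holds in the second argument too. So `J a b` for `a ∈ f A f`,
`b ∈ (1 - f) A (1 - f)` lies in both corners and vanishes.
-/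

section Corner

variable {A : Type*} [Ring A] {f x : A}

theorem IsIdempotentElem.mul_eq_self_of_mul_mul_eq (hf : IsIdempotentElem f)
    (hx : f * x * f = x) : f * x = x := by
  rw [← hx, ← mul_assoc, ← mul_assoc, hf.eq]

theorem IsIdempotentElem.mul_eq_self_of_mul_mul_eq' (hf : IsIdempotentElem f)
    (hx : f * x * f = x) : x * f = x := by
  rw [← hx, mul_assoc, hf.eq]

theorem IsIdempotentElem.eq_mul_mul_of_mul_add_mul_eq_add (htf : ∀ y : A, y + y = 0 → y = 0)
    (hf : IsIdempotentElem f) (hx : f * x + x * f = x + x) : x = f * x * f := by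
  have hleft : f * x = f * x * f := by
    have h := congr_arg (f * ·) hx
    simp only [mul_add, ← mul_assoc, hf.eq] at h
    exact (add_left_cancel h).symm
  have hright : x * f = f * x * f := by
    have h := congr_arg (· * f) hx
    simp only [add_mul, mul_assoc, hf.eq] at h
    rw [← mul_assoc] at h
    exact (add_right_cancel h).symm
  refine sub_eq_zero.mp (htf _ ?_)
  linear_combination (norm := noncomm_ring) hleft + hright - hx

theorem IsIdempotentElem.eq_zero_of_mul_mul_eq_of_one_sub_mul_mul_eq (hf : IsIdempotentElem f)
    (h₁ : f * x * f = x) (h₂ : (1 - f) * x * (1 - f) = x) : x = 0 := by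
  rw [← h₁, ← h₂, ← mul_assoc, ← mul_assoc, hf.mul_one_sub_self, zero_mul, zero_mul, zero_mul]

end Corner

structure IsJordanBiderivation_s8 {R A : Type*} [CommRing R] [Ring A] [Algebra R A]
    (J : A →ₗ[R] A →ₗ[R] A) : Prop where
  map_mul_self_left : ∀ x y : A, J (x * x) y = x * J x y + J x y * x
  map_mul_self_right : ∀ x y : A, J x (y * y) = y * J x y + J x y * y

namespace IsJordanBiderivation_s8

variable {R A : Type*} [CommRing R] [Ring A] [Algebra R A] {J : A →ₗ[R] A →ₗ[R] A}

theorem flip (hJ : IsJordanBiderivation_s8 J) : IsJordanBiderivation_s8 J.flip :=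
  ⟨fun x y ↦ hJ.map_mul_self_right y x, fun x y ↦ hJ.map_mul_self_left y x⟩

theorem map_mul_add_mul_left (hJ : IsJordanBiderivation_s8 J) (x z y : A) :
    J (x * z + z * x) y = x * J z y + J z y * x + z * J x y + J x y * z := by
  have h := hJ.map_mul_self_left (x + z) y
  rw [show (x + z) * (x + z) = x * x + (x * z + z * x) + z * z by noncomm_ring] at h
  simp only [map_add, LinearMap.add_apply] at h ⊢
  linear_combination (norm := noncomm_ring) h - hJ.map_mul_self_left x y - hJ.map_mul_self_left z y

theorem apply_one_left (hJ : IsJordanBiderivation_s8 J) (y : A) : J 1 y = 0 := by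
  have h := hJ.map_mul_self_left 1 y
  rw [one_mul, one_mul, mul_one] at h
  exact add_eq_right.mp h.symm

theorem apply_one_sub_left (hJ : IsJordanBiderivation_s8 J) (x y : A) :
    J (1 - x) y = -J x y := by
  rw [map_sub, LinearMap.sub_apply, hJ.apply_one_left, zero_sub]

theorem apply_one_sub_one_sub (hJ : IsJordanBiderivation_s8 J) (x : A) :
    J (1 - x) (1 - x) = J x x := by
  rw [hJ.apply_one_sub_left, ← J.flip_apply, hJ.flip.apply_one_sub_left, J.flip_apply, neg_neg]

variable {f : A}

theorem apply_idempotent_corner_eq_zero (hJ : IsJordanBiderivation_s8 J) (hf : IsIdempotentElem f)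
    (hff : J f f = 0) {w : A} (hw : f * w * f = w) : J f w = 0 := by
  have h := hJ.flip.map_mul_add_mul_left f w f
  have hfw : J f w = f * J f w + J f w * f := by
    simpa only [hf.eq] using hJ.map_mul_self_left f w
  simp only [LinearMap.flip_apply, hff, hf.mul_eq_self_of_mul_mul_eq hw,
    hf.mul_eq_self_of_mul_mul_eq' hw, map_add, mul_zero, zero_mul, add_zero, ← hfw] at h
  exact add_eq_right.mp h

theorem apply_eq_mul_mul_of_apply_idempotent_eq_zero (htf : ∀ x : A, x + x = 0 → x = 0)
    (hJ : IsJordanBiderivation_s8 J) (hf : IsIdempotentElem f) {y z : A} (hfy : J f y = 0)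
    (hz : f * z * f = z) : J z y = f * J z y * f := by
  have h := hJ.map_mul_add_mul_left f z y
  rw [hf.mul_eq_self_of_mul_mul_eq hz, hf.mul_eq_self_of_mul_mul_eq' hz, hfy, map_add,
    LinearMap.add_apply, mul_zero, zero_mul, add_zero, add_zero] at h
  exact hf.eq_mul_mul_of_mul_add_mul_eq_add htf h.symm

theorem apply_eq_mul_mul_of_mem_corner (htf : ∀ x : A, x + x = 0 → x = 0)
    (hJ : IsJordanBiderivation_s8 J) (hf : IsIdempotentElem f) (hff : J f f = 0) {a a' : A}
    (ha : f * a * f = a) (ha' : f * a' * f = a') : J a a' = f * J a a' * f :=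
  hJ.apply_eq_mul_mul_of_apply_idempotent_eq_zero htf hf
    (hJ.apply_idempotent_corner_eq_zero hf hff ha') ha

theorem apply_eq_zero_of_mem_corner_of_mem_one_sub_corner (htf : ∀ x : A, x + x = 0 → x = 0)
    (hJ : IsJordanBiderivation_s8 J) (hf : IsIdempotentElem f) (hff : J f f = 0) {a b : A}
    (ha : f * a * f = a) (hb : (1 - f) * b * (1 - f) = b) : J a b = 0 := by
  have hfb : J f b = 0 := by
    rw [← neg_neg (J f b), ← hJ.apply_one_sub_left,
      hJ.apply_idempotent_corner_eq_zero hf.one_sub (by rwa [hJ.apply_one_sub_one_sub]) hb,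
      neg_zero]
  have hfa : J.flip (1 - f) a = 0 := by
    rw [hJ.flip.apply_one_sub_left,
      hJ.flip.apply_idempotent_corner_eq_zero hf (by rwa [J.flip_apply]) ha, neg_zero]
  exact hf.eq_zero_of_mul_mul_eq_of_one_sub_mul_mul_eq
    (hJ.apply_eq_mul_mul_of_apply_idempotent_eq_zero htf hf hfb ha).symm
    (hJ.flip.apply_eq_mul_mul_of_apply_idempotent_eq_zero htf hf.one_sub hfa hb).symm

end IsJordanBiderivation_s8

theorem jordan_biderivation_diagonal_components_general
    (R A : Type*) [CommRing R] [Ring A] [Algebra R A]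
    -- `A` is 2-torsion free:
    (htf : ∀ x : A, x + x = 0 → x = 0)
    -- `e` is a nontrivial idempotent:
    (e : A) (he : e * e = e)
    (J : A →ₗ[R] A →ₗ[R] A)
    -- `J` is a Jordan biderivation:
    (hJ1 : ∀ x y : A, J (x * x) y = x * J x y + J x y * x)
    (hJ2 : ∀ x y : A, J x (y * y) = y * J x y + J x y * y)
    -- `J(e, e) = 0`:
    (hJe : J e e = 0) :
    ∀ a a' b b' : A,
      e * a * e = a → e * a' * e = a' →
      (1 - e) * b * (1 - e) = b → (1 - e) * b' * (1 - e) = b' →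
      J a a' = e * J a a' * e ∧
      J b b' = (1 - e) * J b b' * (1 - e) ∧
      J a b = 0 ∧ J b a = 0 := by
  intro a a' b b' ha ha' hb hb'
  have hJ : IsJordanBiderivation_s8 J := ⟨hJ1, hJ2⟩
  have he' : J (1 - e) (1 - e) = 0 := by rw [hJ.apply_one_sub_one_sub, hJe]
  exact ⟨hJ.apply_eq_mul_mul_of_mem_corner htf he hJe ha ha',
    hJ.apply_eq_mul_mul_of_mem_corner htf (IsIdempotentElem.one_sub he) he' hb hb',
    hJ.apply_eq_zero_of_mem_corner_of_mem_one_sub_corner htf he hJe ha hb,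
    hJ.flip.apply_eq_zero_of_mem_corner_of_mem_one_sub_corner htf he hJe ha hb⟩

/-- Let `J : A × A → A` be a Jordan biderivation with `J(e,e) = 0`.
Then for all `a, a' ∈ A₁₁ = eAe` and `b, b' ∈ A₂₂ = e'Ae'` (`e' = 1 - e`):
`J(a,a') = eJ(a,a')e`, `J(b,b') = e'J(b,b')e'`, and `J(a,b) = 0 = J(b,a)`. -/
theorem jordan_biderivation_diagonal_components
    (R A : Type*) [CommRing R] [Ring A] [Algebra R A]
    -- `A` is 2-torsion free:
    (htf : ∀ x : A, x + x = 0 → x = 0)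
    -- `e` is a nontrivial idempotent:
    (e : A) (he : e * e = e) (he0 : e ≠ 0) (he1 : e ≠ 1)
    (J : A →ₗ[R] A →ₗ[R] A)
    -- `J` is a Jordan biderivation:
    (hJ1 : ∀ x y : A, J (x * x) y = x * J x y + J x y * x)
    (hJ2 : ∀ x y : A, J x (y * y) = y * J x y + J x y * y)
    -- `J(e, e) = 0`:
    (hJe : J e e = 0) :
    ∀ a a' b b' : A,
      e * a * e = a → e * a' * e = a' →
      (1 - e) * b * (1 - e) = b → (1 - e) * b' * (1 - e) = b' →
      J a a' = e * J a a' * e ∧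
      J b b' = (1 - e) * J b b' * (1 - e) ∧
      J a b = 0 ∧ J b a = 0 :=
  jordan_biderivation_diagonal_components_general R A htf e he J hJ1 hJ2 hJe
end

section
/- Let J : A × A → A be a Jordan biderivation with J(e, e) = 0. Then for all m ∈ A₁₂ and n ∈ A₂₁: J(m, n) = eJ(m, n)e' + e'J(m, n)e + [J(e, n), m] = eJ(m, n)e' + e'J(m, n)e + [n, J(m, e)], and J(n, m) = eJ(n, m)e' + e'J(n, m)e + [J(n, e), m] = eJ(n, m)e' + e'J(n, m)e + [n, J(e, m)]. -/
/-!
For fixed `y`, both `x ↦ J x y` and `x ↦ J y x` are Jordan derivations, so it suffices to treat a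
Jordan derivation `d` and `m ∈ eAe'`. Polarizing `d (x * x)` at `e` and `m` gives
`d m = e d(m) + d(m) e + m d(e) + d(e) m`, and `d e = e d(e) + d(e) e` gives `m d(e) e = m d(e)`.
Compressing the first identity by `e` and by `e'` then yields
`e d(m) e = - m d(e)` and `e' d(m) e' = d(e) m`. The case `n ∈ e'Ae` is the case `m ∈ eAe'` for the
idempotent `e'`, since `d e' = - d e`.
-/

section

variable {A : Type*} [Ring A]

namespace IsIdempotentElem

variable {e m : A}

theorem mul_eq_self_of_mul_mul_one_sub_eq (he : IsIdempotentElem e) (hm : e * m * (1 - e) = m) :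
    e * m = m := by
  rw [← hm, ← mul_assoc, ← mul_assoc, he.eq]

theorem mul_eq_zero_of_mul_mul_one_sub_eq (he : IsIdempotentElem e) (hm : e * m * (1 - e) = m) :
    m * e = 0 := by
  rw [← hm, mul_assoc, he.one_sub_mul_self, mul_zero]

end IsIdempotentElem

def IsJordanDerivation (d : A →+ A) : Prop :=
  ∀ x, d (x * x) = x * d x + d x * x

namespace IsJordanDerivation

variable {d : A →+ A}

theorem map_one (hd : IsJordanDerivation d) : d 1 = 0 := by
  simpa using hd 1

theorem map_mul_add_mul_comm (hd : IsJordanDerivation d) (x z : A) :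
    d (x * z + z * x) = x * d z + d z * x + z * d x + d x * z := by
  have h := hd (x + z)
  rw [show (x + z) * (x + z) = x * x + (x * z + z * x) + z * z by noncomm_ring] at h
  simp only [map_add] at h ⊢
  linear_combination (norm := noncomm_ring) h - hd x - hd z

variable {e : A}

theorem apply_of_mul_mul_one_sub_eq (hd : IsJordanDerivation d) (he : IsIdempotentElem e) {m : A}
    (hm : e * m * (1 - e) = m) :
    d m = e * d m * (1 - e) + (1 - e) * d m * e + (d e * m - m * d e) := by
  have hem := he.mul_eq_self_of_mul_mul_one_sub_eq hm
  have hme := he.mul_eq_zero_of_mul_mul_one_sub_eq hm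
  have hde : d e = e * d e + d e * e := by rw [← hd e, he.eq]
  have hdm : d m = e * d m + d m * e + m * d e + d e * m := by
    rw [← hd.map_mul_add_mul_comm, hem, hme, add_zero]
  have hmde : m * d e * e = m * d e := by
    linear_combination (norm := noncomm_ring) -(m * hde) - hme * d e
  have h11 : e * d m * e = -(m * d e) := by
    linear_combination (norm := noncomm_ring)
      -(e * hdm * e) - he.eq * (d m * e) - e * d m * he.eq - hem * (d e * e) - e * d e * hme - hmde
  have h22 : (1 - e) * d m * (1 - e) = d e * m := by
    linear_combination (norm := noncomm_ring) hdm + h11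
  linear_combination (norm := noncomm_ring) h11 + h22

theorem apply_of_one_sub_mul_mul_eq (hd : IsJordanDerivation d) (he : IsIdempotentElem e) {n : A}
    (hn : (1 - e) * n * e = n) :
    d n = e * d n * (1 - e) + (1 - e) * d n * e + (n * d e - d e * n) := by
  have h := hd.apply_of_mul_mul_one_sub_eq he.one_sub (by rwa [sub_sub_cancel])
  rw [sub_sub_cancel, map_sub, hd.map_one, zero_sub] at h
  linear_combination (norm := noncomm_ring) h

end IsJordanDerivation

end

theorem jordan_biderivation_mixed_mn_components_general
    (R A : Type*) [CommRing R] [Ring A] [Algebra R A]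
    -- `e` is a nontrivial idempotent:
    (e : A) (he : e * e = e)
    (J : A →ₗ[R] A →ₗ[R] A)
    -- `J` is a Jordan biderivation:
    (hJ1 : ∀ x y : A, J (x * x) y = x * J x y + J x y * x)
    (hJ2 : ∀ x y : A, J x (y * y) = y * J x y + J x y * y) :
    ∀ m n : A,
      e * m * (1 - e) = m → (1 - e) * n * e = n →
      J m n = e * J m n * (1 - e) + (1 - e) * J m n * e + (J e n * m - m * J e n) ∧
      J m n = e * J m n * (1 - e) + (1 - e) * J m n * e + (n * J m e - J m e * n) ∧
      J n m = e * J n m * (1 - e) + (1 - e) * J n m * e + (J n e * m - m * J n e) ∧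
      J n m = e * J n m * (1 - e) + (1 - e) * J n m * e + (n * J e m - J e m * n) := by
  intro m n hm hn
  have hLeft (y : A) : IsJordanDerivation (J.flip y).toAddMonoidHom := fun x => hJ1 x y
  have hRight (x : A) : IsJordanDerivation (J x).toAddMonoidHom := hJ2 x
  exact ⟨(hLeft n).apply_of_mul_mul_one_sub_eq he hm, (hRight m).apply_of_one_sub_mul_mul_eq he hn,
    (hRight n).apply_of_mul_mul_one_sub_eq he hm, (hLeft m).apply_of_one_sub_mul_mul_eq he hn⟩

/-- Let `J : A × A → A` be a Jordan biderivation with `J(e,e) = 0`.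
Then for all `m ∈ A₁₂ = eAe'` and `n ∈ A₂₁ = e'Ae` (`e' = 1 - e`):
`J(m,n) = eJ(m,n)e' + e'J(m,n)e + [J(e,n), m] = eJ(m,n)e' + e'J(m,n)e + [n, J(m,e)]`
and
`J(n,m) = eJ(n,m)e' + e'J(n,m)e + [J(n,e), m] = eJ(n,m)e' + e'J(n,m)e + [n, J(e,m)]`. -/
theorem jordan_biderivation_mixed_mn_components
    (R A : Type*) [CommRing R] [Ring A] [Algebra R A]
    -- `A` is 2-torsion free:
    (htf : ∀ x : A, x + x = 0 → x = 0)
    -- `e` is a nontrivial idempotent: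
    (e : A) (he : e * e = e) (he0 : e ≠ 0) (he1 : e ≠ 1)
    (J : A →ₗ[R] A →ₗ[R] A)
    -- `J` is a Jordan biderivation:
    (hJ1 : ∀ x y : A, J (x * x) y = x * J x y + J x y * x)
    (hJ2 : ∀ x y : A, J x (y * y) = y * J x y + J x y * y)
    -- `J(e, e) = 0`:
    (hJe : J e e = 0) :
    ∀ m n : A,
      e * m * (1 - e) = m → (1 - e) * n * e = n →
      J m n = e * J m n * (1 - e) + (1 - e) * J m n * e + (J e n * m - m * J e n) ∧
      J m n = e * J m n * (1 - e) + (1 - e) * J m n * e + (n * J m e - J m e * n) ∧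
      J n m = e * J n m * (1 - e) + (1 - e) * J n m * e + (J n e * m - m * J n e) ∧
      J n m = e * J n m * (1 - e) + (1 - e) * J n m * e + (n * J e m - J e m * n) :=
  jordan_biderivation_mixed_mn_components_general R A e he J hJ1 hJ2
end
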